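/- arXiv:1410.4044 — 2 statements merged into one kernel-verified Lean document; each statement's English description precedes it below -/
import Mathlib

section
/- Let ψ be a purely propositional formula (no CTL-operators) and let χ ∈ CTL({AX}) be a formula in which every occurrence of an AX-operator is positive, i.e., lies within the scope of an even number of negation symbols. Then ψ ∧ AG χ is satisfiable if and only if ψ ∧ EG χ is satisfiable. -/
/-- Syntax of CTL formulas over a type `V` of propositional variables. -/
inductive CTL (V : Type) : Type
  | tt : CTL V
  | ff : CTL V
  | var : V → CTL V
  | and : CTL V → CTL V → CTL V
  | or : CTL V → CTL V → CTL V
  | not : CTL V → CTL V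
  | AX : CTL V → CTL V
  | EX : CTL V → CTL V
  | AF : CTL V → CTL V
  | EF : CTL V → CTL V
  | AG : CTL V → CTL V
  | EG : CTL V → CTL V
  | AU : CTL V → CTL V → CTL V
  | EU : CTL V → CTL V → CTL V
  deriving DecidableEq

/-- `φ → ψ` abbreviates `¬φ ∨ ψ`. -/
def CTL.impl {V : Type} (φ ψ : CTL V) : CTL V := .or (.not φ) ψ

def bigAndList {V : Type} : List (CTL V) → CTL V
  | [] => .tt
  | φ :: l => .and φ (bigAndList l)

/-- Conjunction over `i ∈ {a, …, b}` (the empty conjunction `⊤` if `b < a`). -/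
def conjIcc {V : Type} (a b : ℕ) (f : ℕ → CTL V) : CTL V :=
  bigAndList ((List.range' a (b + 1 - a)).map f)

/-- Conjunction over `i ∈ {0, …, c-1}`. -/
def conjRange {V : Type} (c : ℕ) (f : ℕ → CTL V) : CTL V :=
  bigAndList ((List.range c).map f)

/-- A Kripke structure: a finite nonempty set of worlds, a total successor
relation, and a labeling of worlds with propositional variables. -/
structure Kripke (V : Type) : Type 1 where
  W : Type
  [instFin : Fintype W]
  [instNonempty : Nonempty W]
  R : W → W → Prop
  total : ∀ w, ∃ w', R w w'
  val : W → V → Prop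

/-- A path is an infinite `R`-sequence of worlds. -/
def Kripke.IsPath {V : Type} (K : Kripke V) (π : ℕ → K.W) : Prop :=
  ∀ i, K.R (π i) (π (i + 1))

/-- Semantics of CTL: `Sat K φ w` means `K, w ⊨ φ`. -/
def Sat {V : Type} (K : Kripke V) : CTL V → K.W → Prop
  | .tt, _ => True
  | .ff, _ => False
  | .var p, w => K.val w p
  | .and φ ψ, w => Sat K φ w ∧ Sat K ψ w
  | .or φ ψ, w => Sat K φ w ∨ Sat K ψ w
  | .not φ, w => ¬ Sat K φ w
  | .AX φ, w => ∀ π, K.IsPath π → π 0 = w → Sat K φ (π 1)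
  | .EX φ, w => ∃ π, K.IsPath π ∧ π 0 = w ∧ Sat K φ (π 1)
  | .AF φ, w => ∀ π, K.IsPath π → π 0 = w → ∃ i, Sat K φ (π i)
  | .EF φ, w => ∃ π, K.IsPath π ∧ π 0 = w ∧ ∃ i, Sat K φ (π i)
  | .AG φ, w => ∀ π, K.IsPath π → π 0 = w → ∀ i, Sat K φ (π i)
  | .EG φ, w => ∃ π, K.IsPath π ∧ π 0 = w ∧ ∀ i, Sat K φ (π i)
  | .AU φ ψ, w => ∀ π, K.IsPath π → π 0 = w →
      ∃ i, Sat K ψ (π i) ∧ ∀ j, j < i → Sat K φ (π j)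
  | .EU φ ψ, w => ∃ π, K.IsPath π ∧ π 0 = w ∧
      ∃ i, Sat K ψ (π i) ∧ ∀ j, j < i → Sat K φ (π j)

/-- A formula is satisfiable if it holds at some world of some Kripke structure. -/
def CTL.Satisfiable {V : Type} (φ : CTL V) : Prop :=
  ∃ (K : Kripke V) (w : K.W), Sat K φ w

/-- A purely propositional formula (no CTL-operators). -/
def CTL.IsProp {V : Type} : CTL V → Prop
  | .tt => True
  | .ff => True
  | .var _ => True
  | .and φ ψ => φ.IsProp ∧ ψ.IsProp
  | .or φ ψ => φ.IsProp ∧ ψ.IsProp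
  | .not φ => φ.IsProp
  | _ => False

/-- Membership in the fragment CTL({AX}): the only CTL-operator occurring is AX. -/
def CTL.OnlyAX {V : Type} : CTL V → Prop
  | .tt => True
  | .ff => True
  | .var _ => True
  | .and φ ψ => φ.OnlyAX ∧ ψ.OnlyAX
  | .or φ ψ => φ.OnlyAX ∧ ψ.OnlyAX
  | .not φ => φ.OnlyAX
  | .AX φ => φ.OnlyAX
  | _ => False

/-- `CTL.AXOk b φ`: in the context of `b = true` (an even number of enclosing
negations) resp. `b = false` (odd), every occurrence of an AX-operator in `φ`
lies within the scope of an even number of negation symbols overall.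
In particular `CTL.AXOk true φ` says that every AX occurrence in `φ` is positive. -/
def CTL.AXOk {V : Type} : Bool → CTL V → Prop
  | _, .tt => True
  | _, .ff => True
  | _, .var _ => True
  | b, .and φ ψ => φ.AXOk b ∧ ψ.AXOk b
  | b, .or φ ψ => φ.AXOk b ∧ ψ.AXOk b
  | b, .not φ => φ.AXOk (!b)
  | b, .AX φ => b = true ∧ φ.AXOk b
  | b, .EX φ => φ.AXOk b
  | b, .AF φ => φ.AXOk b
  | b, .EF φ => φ.AXOk b
  | b, .AG φ => φ.AXOk b
  | b, .EG φ => φ.AXOk b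
  | b, .AU φ ψ => φ.AXOk b ∧ ψ.AXOk b
  | b, .EU φ ψ => φ.AXOk b ∧ ψ.AXOk b

/-!
From a model of `ψ ∧ AG χ` any path through the initial world witnesses `EG χ`. Conversely,
given a path `π` along which `χ` holds, cut the structure down to the worlds on `π`, with an edge
from `π i` to `π (i+1)` only. The inclusion into the original structure preserves labels and
edges, so propositional formulas keep their truth value, and a formula whose AX-operators all
occur positively can only become truer when successors are removed. Hence `χ` holds at every
world of the cut-down structure, i.e. `AG χ` holds there.
-/

section

variable {V : Type}

theorem Kripke.exists_path (K : Kripke V) (w : K.W) : ∃ π, K.IsPath π ∧ π 0 = w := by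
  choose next hnext using K.total
  refine ⟨fun n => next^[n] w, fun i => ?_, rfl⟩
  simpa only [Function.iterate_succ_apply'] using hnext (next^[i] w)

theorem sat_EG_of_sat_AG {K : Kripke V} {φ : CTL V} {w : K.W} (h : Sat K (.AG φ) w) :
    Sat K (.EG φ) w := by
  obtain ⟨π, hπ, hπ0⟩ := K.exists_path w
  exact ⟨π, hπ, hπ0, h π hπ hπ0⟩

structure Kripke.Hom (K' K : Kripke V) where
  toFun : K'.W → K.W
  map_rel : ∀ u v, K'.R u v → K.R (toFun u) (toFun v)
  val_iff : ∀ u p, K.val (toFun u) p ↔ K'.val u p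

theorem CTL.IsProp.onlyAX {φ : CTL V} (hφ : φ.IsProp) : φ.OnlyAX := by
  induction φ <;> simp_all [CTL.IsProp, CTL.OnlyAX]

theorem CTL.IsProp.axOk {φ : CTL V} (hφ : φ.IsProp) : ∀ b, φ.AXOk b := by
  induction φ <;> simp_all [CTL.IsProp, CTL.AXOk]

namespace Kripke.Hom

variable {K K' : Kripke V} (f : K'.Hom K)

theorem isPath_comp {π : ℕ → K'.W} (hπ : K'.IsPath π) : K.IsPath (f.toFun ∘ π) :=
  fun i => f.map_rel _ _ (hπ i)

/-- Removing successors can only make `AX` truer, so formulas whose AX-operators occur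
positively are reflected along `f`; negation swaps the two directions. -/
theorem sat_transfer {φ : CTL V} (hφ : φ.OnlyAX) {b : Bool} (hb : φ.AXOk b) (u : K'.W) :
    (b = true → Sat K φ (f.toFun u) → Sat K' φ u) ∧
      (b = false → Sat K' φ u → Sat K φ (f.toFun u)) := by
  induction φ generalizing b u with
  | tt | ff => simp [Sat]
  | var p => simp only [Sat, f.val_iff, imp_self, implies_true, and_self]
  | and φ₁ φ₂ ih₁ ih₂ =>
    have h₁ := ih₁ hφ.1 hb.1 u
    have h₂ := ih₂ hφ.2 hb.2 u
    exact ⟨fun hb h => ⟨h₁.1 hb h.1, h₂.1 hb h.2⟩, fun hb h => ⟨h₁.2 hb h.1, h₂.2 hb h.2⟩⟩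
  | or φ₁ φ₂ ih₁ ih₂ =>
    have h₁ := ih₁ hφ.1 hb.1 u
    have h₂ := ih₂ hφ.2 hb.2 u
    exact ⟨fun hb h => h.imp (h₁.1 hb) (h₂.1 hb), fun hb h => h.imp (h₁.2 hb) (h₂.2 hb)⟩
  | not φ ih =>
    have h := ih hφ hb u
    refine ⟨fun hb' hK hK' => hK (h.2 ?_ hK'), fun hb' hK' hK => hK' (h.1 ?_ hK)⟩ <;> simp [hb']
  | AX φ ih =>
    obtain ⟨rfl, hb⟩ := hb
    refine ⟨fun _ h σ hσ hσ0 => (ih hφ hb (σ 1)).1 rfl ?_, by simp⟩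
    exact h _ (f.isPath_comp hσ) (by simp [hσ0])
  | _ => exact hφ.elim

theorem sat_of_sat_map {φ : CTL V} (hφ : φ.OnlyAX) (hpos : φ.AXOk true) {u : K'.W}
    (h : Sat K φ (f.toFun u)) : Sat K' φ u :=
  (f.sat_transfer hφ hpos u).1 rfl h

theorem sat_map_iff {φ : CTL V} (hφ : φ.IsProp) (u : K'.W) :
    Sat K φ (f.toFun u) ↔ Sat K' φ u :=
  ⟨(f.sat_transfer hφ.onlyAX (hφ.axOk true) u).1 rfl,
    (f.sat_transfer hφ.onlyAX (hφ.axOk false) u).2 rfl⟩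

end Kripke.Hom

noncomputable def Kripke.restrictPath (K : Kripke V) (π : ℕ → K.W) : Kripke V where
  W := Set.range π
  instFin := have := K.instFin; Fintype.ofFinite _
  instNonempty := ⟨⟨π 0, 0, rfl⟩⟩
  R u v := ∃ i, π i = u ∧ π (i + 1) = v
  total := by
    rintro ⟨_, i, rfl⟩
    exact ⟨⟨π (i + 1), i + 1, rfl⟩, i, rfl, rfl⟩
  val u := K.val u

def Kripke.restrictPathHom (K : Kripke V) {π : ℕ → K.W} (hπ : K.IsPath π) :
    (K.restrictPath π).Hom K where
  toFun := Subtype.val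
  map_rel := by
    rintro _ _ ⟨i, hu, hv⟩
    rw [← hu, ← hv]
    exact hπ i
  val_iff _ _ := Iff.rfl

end

/-- For propositional `ψ` and `χ ∈ CTL({AX})` with only positive AX occurrences,
`ψ ∧ AG χ` is satisfiable iff `ψ ∧ EG χ` is satisfiable. -/
theorem statement1 {V : Type} (ψ χ : CTL V) (hψ : ψ.IsProp) (hχ : χ.OnlyAX)
    (hpos : χ.AXOk true) :
    (CTL.and ψ (.AG χ)).Satisfiable ↔ (CTL.and ψ (.EG χ)).Satisfiable := by
  constructor
  · rintro ⟨K, w, hw, hAG⟩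
    exact ⟨K, w, hw, sat_EG_of_sat_AG hAG⟩
  · rintro ⟨K, w, hw, π, hπ, rfl, hχπ⟩
    let f := K.restrictPathHom hπ
    refine ⟨K.restrictPath π, ⟨π 0, 0, rfl⟩, (f.sat_map_iff hψ _).1 hw, ?_⟩
    intro σ _ _ i
    generalize σ i = u
    obtain ⟨_, j, rfl⟩ := u
    exact f.sat_of_sat_map hχ hpos (hχπ j)
end

section
/- Let φ ∈ CTL_NNF({AX,EX}) and let e be the number of subformulas of φ of the form EXψ. Then φ is satisfiable if and only if φ has a model (K,w_0) whose set of worlds is the node set of a finite rooted tree of height at most td(φ) with root w_0, whose relation R consists of the parent-to-child edges of the tree together with a self-loop at every leaf, and in which every node has at most max(1, e) children. -/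
/-- A formula is in negation normal form: negation occurs only directly in
front of propositional variables. -/
def CTL.IsNNF {V : Type} : CTL V → Prop
  | .not (.var _) => True
  | .not _ => False
  | .and φ ψ => φ.IsNNF ∧ ψ.IsNNF
  | .or φ ψ => φ.IsNNF ∧ ψ.IsNNF
  | .AX φ => φ.IsNNF
  | .EX φ => φ.IsNNF
  | .AF φ => φ.IsNNF
  | .EF φ => φ.IsNNF
  | .AG φ => φ.IsNNF
  | .EG φ => φ.IsNNF
  | .AU φ ψ => φ.IsNNF ∧ ψ.IsNNF
  | .EU φ ψ => φ.IsNNF ∧ ψ.IsNNF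
  | _ => True

/-- Membership in the fragment CTL({AX,EX}): only the CTL-operators AX and EX occur. -/
def CTL.OnlyAXEX {V : Type} : CTL V → Prop
  | .tt => True
  | .ff => True
  | .var _ => True
  | .and φ ψ => φ.OnlyAXEX ∧ ψ.OnlyAXEX
  | .or φ ψ => φ.OnlyAXEX ∧ ψ.OnlyAXEX
  | .not φ => φ.OnlyAXEX
  | .AX φ => φ.OnlyAXEX
  | .EX φ => φ.OnlyAXEX
  | _ => False

/-- The temporal depth of a formula. -/
def CTL.td {V : Type} : CTL V → ℕ
  | .tt => 0
  | .ff => 0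
  | .var _ => 0
  | .and φ ψ => max φ.td ψ.td
  | .or φ ψ => max φ.td ψ.td
  | .not φ => φ.td
  | .AX φ => φ.td + 1
  | .EX φ => φ.td + 1
  | .AF φ => φ.td + 1
  | .EF φ => φ.td + 1
  | .AG φ => φ.td + 1
  | .EG φ => φ.td + 1
  | .AU φ ψ => max φ.td ψ.td + 1
  | .EU φ ψ => max φ.td ψ.td + 1

/-- The set of subformulas of a formula (including the formula itself). -/
def CTL.SF {V : Type} [DecidableEq V] : CTL V → Finset (CTL V)
  | .tt => {CTL.tt}
  | .ff => {CTL.ff}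
  | .var v => {CTL.var v}
  | .and φ ψ => insert (.and φ ψ) (φ.SF ∪ ψ.SF)
  | .or φ ψ => insert (.or φ ψ) (φ.SF ∪ ψ.SF)
  | .not φ => insert (.not φ) φ.SF
  | .AX φ => insert (.AX φ) φ.SF
  | .EX φ => insert (.EX φ) φ.SF
  | .AF φ => insert (.AF φ) φ.SF
  | .EF φ => insert (.EF φ) φ.SF
  | .AG φ => insert (.AG φ) φ.SF
  | .EG φ => insert (.EG φ) φ.SF
  | .AU φ ψ => insert (.AU φ ψ) (φ.SF ∪ ψ.SF)
  | .EU φ ψ => insert (.EU φ ψ) (φ.SF ∪ ψ.SF)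

/-- Whether a formula is of the form `EX ψ`. -/
def CTL.isEXForm {V : Type} : CTL V → Bool
  | .EX _ => true
  | _ => false

/-- The number of subformulas of `φ` of the form `EX ψ`. -/
def numEX {V : Type} [DecidableEq V] (φ : CTL V) : ℕ :=
  (φ.SF.filter (fun ψ => ψ.isEXForm = true)).card

/-!
Unravel a model `(K₀, w₀)` of `φ` into the complete tree of height `td φ` whose nodes are words
over `max 1 e` letters, and map each node back into `K₀`: the `i`-th child of a node is sent to a
witness, chosen once and for all in `K₀`, of the `i`-th `EX`-subformula of `φ` (to an arbitrary
successor if that subformula is false there). By induction on NNF formulas of the fragment, a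
formula true at the image of a node is true at the node, as long as its temporal depth fits into
the height left below that node: `EX ψ` is witnessed by the designated child, and `AX ψ` survives
because every successor of an inner node is a child, hence mapped to a successor in `K₀`.
Leaves only carry their self-loop, and no formula of positive depth is evaluated there.
-/

section

variable {V : Type}

namespace Kripke

theorem exists_path_of_R (K : Kripke V) {w v : K.W} (h : K.R w v) :
    ∃ π, K.IsPath π ∧ π 0 = w ∧ π 1 = v := by
  choose next hnext using K.total
  refine ⟨fun i => Nat.casesOn i w fun j => next^[j] v, ?_, rfl, rfl⟩
  rintro (_ | j)
  · exact h
  · simpa only [Function.iterate_succ_apply'] using hnext _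

end Kripke

theorem sat_EX_iff {K : Kripke V} {ψ : CTL V} {w : K.W} :
    Sat K (.EX ψ) w ↔ ∃ v, K.R w v ∧ Sat K ψ v := by
  constructor
  · rintro ⟨π, hπ, rfl, h⟩
    exact ⟨π 1, hπ 0, h⟩
  · rintro ⟨v, hR, h⟩
    obtain ⟨π, hπ, h0, h1⟩ := K.exists_path_of_R hR
    exact ⟨π, hπ, h0, h1 ▸ h⟩

theorem sat_AX_iff {K : Kripke V} {ψ : CTL V} {w : K.W} :
    Sat K (.AX ψ) w ↔ ∀ v, K.R w v → Sat K ψ v := by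
  constructor
  · intro h v hR
    obtain ⟨π, hπ, h0, h1⟩ := K.exists_path_of_R hR
    exact h1 ▸ h π hπ h0
  · intro h π hπ h0
    exact h _ (h0 ▸ hπ 0)

theorem Kripke.exists_EX_witness (K : Kripke V) :
    ∃ sel : K.W → CTL V → K.W,
      (∀ w χ, K.R w (sel w χ)) ∧ ∀ w ψ, Sat K (.EX ψ) w → Sat K ψ (sel w (.EX ψ)) := by
  have : ∀ w (χ : CTL V), ∃ v, K.R w v ∧ ∀ ψ, χ = .EX ψ → Sat K χ w → Sat K ψ v := by
    intro w χ
    by_cases h : ∃ ψ, χ = .EX ψ ∧ Sat K χ w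
    · obtain ⟨ψ, rfl, hψ⟩ := h
      obtain ⟨v, hR, hv⟩ := sat_EX_iff.1 hψ
      exact ⟨v, hR, fun ψ' h' _ => CTL.EX.inj h' ▸ hv⟩
    · obtain ⟨v, hR⟩ := K.total w
      exact ⟨v, hR, fun ψ hχ hs => (h ⟨ψ, hχ, hs⟩).elim⟩
  choose sel hR hsat using this
  exact ⟨sel, hR, fun w ψ h => hsat w _ ψ rfl h⟩

theorem Finset.exists_fin_covering {α : Type*} [Inhabited α] (s : Finset α) {b : ℕ}
    (hb : s.card ≤ b) : ∃ f : Fin b → α, ∀ x ∈ s, ∃ i, f i = x := by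
  refine ⟨fun i => s.toList.getD i default, fun x hx => ?_⟩
  obtain ⟨i, hi, rfl⟩ := List.getElem_of_mem (Finset.mem_toList.2 hx)
  exact ⟨⟨i, (Finset.length_toList s ▸ hi).trans_le hb⟩, List.getD_eq_getElem _ _ hi⟩

instance : Inhabited (CTL V) := ⟨.tt⟩

structure IsEXUnfolding (K : Kripke V) (S : Finset (CTL V)) {b : ℕ} (g : List (Fin b) → K.W) :
    Prop where
  R_cons : ∀ i u, K.R (g u) (g (i :: u))
  exists_witness : ∀ ψ, .EX ψ ∈ S → ∃ i, ∀ u, Sat K (.EX ψ) (g u) → Sat K ψ (g (i :: u))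

theorem Kripke.exists_isEXUnfolding (K : Kripke V) (w₀ : K.W) (S : Finset (CTL V)) {b : ℕ}
    (hb : (S.filter fun ψ => ψ.isEXForm = true).card ≤ b) :
    ∃ g : List (Fin b) → K.W, g [] = w₀ ∧ IsEXUnfolding K S g := by
  obtain ⟨sel, hR, hsel⟩ := K.exists_EX_witness
  obtain ⟨f, hf⟩ := Finset.exists_fin_covering _ hb
  refine ⟨List.foldr (fun i w => sel w (f i)) w₀, rfl, fun i u => hR _ _, fun ψ hψ => ?_⟩
  obtain ⟨i, hi⟩ := hf (.EX ψ) (Finset.mem_filter.2 ⟨hψ, rfl⟩)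
  exact ⟨i, fun u h => by simpa only [List.foldr_cons, hi] using hsel _ ψ h⟩

/-- A node of the complete `b`-ary tree of height `n` is the word of child indices on its path
from the root, read from the node upwards: the children of `u` are the `i :: u`. -/
def TreeNode (b n : ℕ) : Type := {u : List (Fin b) // u.length ≤ n}

namespace TreeNode

variable {b n : ℕ}

instance : Finite (TreeNode b n) := (List.finite_length_le (Fin b) n).to_subtype

noncomputable instance : Fintype (TreeNode b n) := Fintype.ofFinite _

def root : TreeNode b n := ⟨[], Nat.zero_le n⟩

instance : Nonempty (TreeNode b n) := ⟨root⟩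

def IsChild (u v : TreeNode b n) : Prop := ∃ i, v.1 = i :: u.1

theorem length_of_isChild {u v : TreeNode b n} (h : IsChild u v) :
    v.1.length = u.1.length + 1 := by
  obtain ⟨i, hi⟩ := h
  simp [hi]

theorem not_isChild_root : ¬ ∃ u : TreeNode b n, IsChild u root := by
  rintro ⟨u, i, hi⟩
  cases hi

theorem existsUnique_parent {v : TreeNode b n} (hv : v ≠ root) : ∃! u, IsChild u v := by
  obtain ⟨l, hl⟩ := v
  cases l with
  | nil => exact (hv rfl).elim
  | cons i u =>
    refine ⟨⟨u, (Nat.le_succ _).trans hl⟩, ⟨i, rfl⟩, ?_⟩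
    rintro ⟨u', _⟩ ⟨j, hj⟩
    exact Subtype.ext (List.cons.inj hj).2.symm

theorem reflTransGen_root_isChild (v : TreeNode b n) : Relation.ReflTransGen IsChild root v := by
  obtain ⟨l, hl⟩ := v
  induction l with
  | nil => exact .refl
  | cons i u ih => exact (ih ((Nat.le_succ _).trans hl)).tail ⟨i, rfl⟩

theorem exists_isChild {u : TreeNode b n} (hb : 0 < b) (hu : u.1.length < n) :
    ∃ v, IsChild u v :=
  ⟨⟨⟨0, hb⟩ :: u.1, hu⟩, _, rfl⟩

theorem ncard_isChild_le (u : TreeNode b n) : {v | IsChild u v}.ncard ≤ b := by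
  calc {v | IsChild u v}.ncard
      ≤ (Set.range (some : Fin b → Option (Fin b))).ncard := by
        refine Set.ncard_le_ncard_of_injOn (fun v => v.1.head?) ?_ ?_
        · rintro v ⟨i, hi⟩
          exact ⟨i, by simp [hi]⟩
        · rintro v ⟨i, hi⟩ v' ⟨j, hj⟩ h
          simp only [hi, hj, List.head?_cons, Option.some.injEq] at h
          exact Subtype.ext (by rw [hi, hj, h])
    _ = b := by rw [Set.ncard_range_of_injective (Option.some_injective _), Nat.card_eq_fintype_card,
        Fintype.card_fin]

end TreeNode

noncomputable def treeKripke (b n : ℕ) (val : TreeNode b n → V → Prop) : Kripke V where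
  W := TreeNode b n
  R u v := u.IsChild v ∨ (u = v ∧ ¬ ∃ x, u.IsChild x)
  total u := by
    by_cases h : ∃ x, u.IsChild x
    · exact ⟨_, .inl h.choose_spec⟩
    · exact ⟨u, .inr ⟨rfl, h⟩⟩
  val := val

theorem sat_treeKripke_of_sat [DecidableEq V] {K : Kripke V} {S : Finset (CTL V)} {b n : ℕ}
    {g : List (Fin b) → K.W} (hg : IsEXUnfolding K S g) (hb : 0 < b) {χ : CTL V}
    (hN : χ.IsNNF) (hO : χ.OnlyAXEX) (hS : χ.SF ⊆ S) (u : TreeNode b n)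
    (hd : u.1.length + χ.td ≤ n) (h : Sat K χ (g u.1)) :
    Sat (treeKripke b n fun u => K.val (g u.1)) χ u := by
  induction χ generalizing u with
  | tt | ff | var => exact h
  | not α =>
    cases α with
    | var => exact h
    | _ => simp [CTL.IsNNF] at hN
  | and α β ihα ihβ =>
    simp only [CTL.td] at hd
    exact ⟨ihα hN.1 hO.1 (fun x hx => hS (by simp [CTL.SF, hx])) u (by omega) h.1,
      ihβ hN.2 hO.2 (fun x hx => hS (by simp [CTL.SF, hx])) u (by omega) h.2⟩
  | or α β ihα ihβ =>
    simp only [CTL.td] at hd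
    exact h.imp (ihα hN.1 hO.1 (fun x hx => hS (by simp [CTL.SF, hx])) u (by omega))
      (ihβ hN.2 hO.2 (fun x hx => hS (by simp [CTL.SF, hx])) u (by omega))
  | AX α ih =>
    simp only [CTL.td] at hd
    refine sat_AX_iff.2 fun v hR => ?_
    -- `u` is not a leaf, so its only successors are its children
    obtain ⟨i, hi⟩ : u.IsChild v :=
      hR.resolve_right fun h' => h'.2 (TreeNode.exists_isChild hb (by omega))
    refine ih hN hO (fun x hx => hS (by simp [CTL.SF, hx])) v (by simp [hi]; omega) ?_
    rw [hi]
    exact sat_AX_iff.1 h _ (hg.R_cons i u.1)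
  | EX α ih =>
    simp only [CTL.td] at hd
    obtain ⟨i, hi⟩ := hg.exists_witness α (hS (by simp [CTL.SF]))
    let v : TreeNode b n := ⟨i :: u.1, by simp; omega⟩
    refine sat_EX_iff.2 ⟨v, .inl ⟨i, rfl⟩, ?_⟩
    exact ih hN hO (fun x hx => hS (by simp [CTL.SF, hx])) v (by simp [v]; omega) (hi u.1 h)
  | AF | EF | AG | EG | AU | EU => simp [CTL.OnlyAXEX] at hO

end

/-- Tree model property for CTL_NNF({AX,EX}): `φ` is satisfiable iff it has a
model `(K, w₀)` whose worlds form a finite rooted tree with root `w₀` (with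
child relation `C` and depth function `ht`) of height at most `td φ`, whose
relation `R` consists of the parent-to-child edges together with a self-loop at
every leaf, and in which every node has at most `max 1 e` children, where `e`
is the number of subformulas of `φ` of the form `EX ψ`. -/
theorem statement5 {V : Type} [DecidableEq V] (φ : CTL V)
    (hNNF : φ.IsNNF) (hfrag : φ.OnlyAXEX) :
    φ.Satisfiable ↔
      ∃ (K : Kripke V) (w0 : K.W) (C : K.W → K.W → Prop) (ht : K.W → ℕ),
        Sat K φ w0 ∧
        (∀ v, v ≠ w0 → ∃! u, C u v) ∧
        (¬ ∃ u, C u w0) ∧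
        (∀ v, Relation.ReflTransGen C w0 v) ∧
        ht w0 = 0 ∧
        (∀ u v, C u v → ht v = ht u + 1) ∧
        (∀ v, ht v ≤ φ.td) ∧
        (∀ u v, K.R u v ↔ (C u v ∨ (u = v ∧ ¬ ∃ x, C u x))) ∧
        (∀ u, {v | C u v}.ncard ≤ max 1 (numEX φ)) := by
  refine ⟨fun ⟨K₀, w₀, hsat⟩ => ?_, fun ⟨K, w0, _, _, hsat, _⟩ => ⟨K, w0, hsat⟩⟩
  obtain ⟨g, hg₀, hg⟩ := K₀.exists_isEXUnfolding w₀ φ.SF (le_max_right 1 (numEX φ))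
  refine ⟨treeKripke _ φ.td fun u => K₀.val (g u.1), TreeNode.root, TreeNode.IsChild,
    fun v => v.1.length, ?_, fun _ => TreeNode.existsUnique_parent, TreeNode.not_isChild_root,
    TreeNode.reflTransGen_root_isChild, rfl, fun _ _ => TreeNode.length_of_isChild,
    fun v => v.2, fun _ _ => Iff.rfl, TreeNode.ncard_isChild_le⟩
  exact sat_treeKripke_of_sat hg (lt_max_of_lt_left one_pos) hNNF hfrag subset_rfl _ (Nat.zero_add _).le
    (hg₀ ▸ hsat)
end
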